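/- arXiv:1308.5206 — 2 statements merged into one kernel-verified Lean document; each statement's English description precedes it below -/
import Mathlib

section
/- Let X be a finite set with |X| ≥ 3 and let U ⊆ 𝒰^X be a nonempty affine subspace over GF(2) such that 1_X is parallel to U and every vector in U is cyclic. Then dim(U) ≤ |X| − 2. -/
open Finset

/-- `u^C` for the cyclic ordering of `X` given by a bijection `C : X ≃ ZMod |X|`
(cyclic orderings are considered up to rotation; this encoding is rotation-invariant
since only differences of positions are used).
`uC C x y z = 1` iff `x,y,z` are distinct and appear in this clockwise cyclic order in `C`. -/
def uC {X : Type*} [Fintype X] [DecidableEq X] (C : X ≃ ZMod (Fintype.card X))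
    (x y z : X) : ZMod 2 :=
  if x ≠ y ∧ y ≠ z ∧ x ≠ z ∧ (C y - C x).val < (C z - C x).val then 1 else 0

/-- A vector `u ∈ GF(2)^{X³}` is cyclic if it is `u^C` for some cyclic ordering `C` of `X`. -/
def IsCyclicVec {X : Type*} [Fintype X] [DecidableEq X] (u : X → X → X → ZMod 2) : Prop :=
  ∃ C : X ≃ ZMod (Fintype.card X), u = uC C

/-- Membership in the affine space `𝒰^X ⊆ GF(2)^{X³}`, given by the four (affine) linear
conditions (0)–(3). -/
def memU {X : Type*} (u : X → X → X → ZMod 2) : Prop :=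
  (∀ x y, u x x y = 0) ∧
  (∀ x y z, u x y z = u y z x) ∧
  (∀ x y z, x ≠ y → y ≠ z → x ≠ z → u x y z + u y x z = 1) ∧
  (∀ t x y z, t ≠ x → t ≠ y → t ≠ z → x ≠ y → x ≠ z → y ≠ z →
    u t x y + u t x z + u t y z + u x y z = 0)

/-- The all-distinct indicator vector `1_X`. -/
def oneX {X : Type*} [DecidableEq X] (x y z : X) : ZMod 2 :=
  if x ≠ y ∧ y ≠ z ∧ x ≠ z then 1 else 0

/-- `v^Y(x,y,z) = 1` iff `x,y,z` are distinct and `|Y ∩ {x,y,z}| ≥ 2`. -/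
def vY {X : Type*} [DecidableEq X] (Y : Finset X) (x y z : X) : ZMod 2 :=
  if (x ≠ y ∧ y ≠ z ∧ x ≠ z) ∧
      ((x ∈ Y ∧ y ∈ Y) ∨ (x ∈ Y ∧ z ∈ Y) ∨ (y ∈ Y ∧ z ∈ Y)) then 1 else 0

private lemma mono_aux (p : ℕ → ℕ) (m : ℕ) (h0 : p 0 = 0)
    (h1 : ∀ j, 1 ≤ j → j ≤ m → 1 ≤ p j)
    (hstep : ∀ j, 1 ≤ j → j + 1 ≤ m → p j < p (j + 1))
    (hub : ∀ j, j ≤ m → p j ≤ m) :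
    ∀ j, j ≤ m → p j = j := by
  have hA : ∀ j, j ≤ m → j ≤ p j := by
    intro j
    induction j with
    | zero => omega
    | succ k ih =>
      intro hk
      rcases Nat.eq_zero_or_pos k with hk0 | hk1
      · subst hk0; exact h1 1 le_rfl hk
      · have h2 := hstep k hk1 hk
        have h3 := ih (by omega)
        omega
  have hB : ∀ d j, 1 ≤ j → j + d ≤ m → p j + d ≤ p (j + d) := by
    intro d
    induction d with
    | zero => intro j _ _; simp
    | succ k ih =>
      intro j hj hjd
      have h1' := ih j hj (by omega)
      have h2' := hstep (j + k) (by omega) (by omega)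
      rw [show j + (k + 1) = (j + k) + 1 from by omega]
      omega
  intro j hj
  rcases Nat.eq_zero_or_pos j with h | h
  · subst h; exact h0
  · have hAj := hA j hj
    have hBj := hB (m - j) j h (by omega)
    have hm := hub m le_rfl
    rw [show j + (m - j) = m from by omega] at hBj
    omega

private lemma uC_consec {X : Type*} [Fintype X] [DecidableEq X]
    (h3 : 3 ≤ Fintype.card X) (C : X ≃ ZMod (Fintype.card X)) (j : ℕ)
    (hj1 : 1 ≤ j) (hj2 : j + 1 ≤ Fintype.card X - 1) :
    uC C (C.symm 0) (C.symm (j : ZMod (Fintype.card X)))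
      (C.symm ((j + 1 : ℕ) : ZMod (Fintype.card X))) = 1 := by
  haveI : NeZero (Fintype.card X) := ⟨by omega⟩
  have vj : ((j : ZMod (Fintype.card X))).val = j := ZMod.val_cast_of_lt (by omega)
  have vj1 : (((j + 1 : ℕ) : ZMod (Fintype.card X))).val = j + 1 := ZMod.val_cast_of_lt (by omega)
  have hinj : ∀ u v : ZMod (Fintype.card X), u.val ≠ v.val → C.symm u ≠ C.symm v := by
    intro u v huv h
    exact huv (congrArg ZMod.val (C.symm.injective h))
  unfold uC
  rw [if_pos]
  refine ⟨hinj _ _ (by rw [ZMod.val_zero, vj]; omega),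
    hinj _ _ (by rw [vj, vj1]; omega),
    hinj _ _ (by rw [ZMod.val_zero, vj1]; omega), ?_⟩
  rw [C.apply_symm_apply, C.apply_symm_apply, C.apply_symm_apply, sub_zero, sub_zero, vj, vj1]
  omega

private lemma uC_eq_of_agree {X : Type*} [Fintype X] [DecidableEq X]
    (h3 : 3 ≤ Fintype.card X) (C C' : X ≃ ZMod (Fintype.card X))
    (hagree : ∀ j : ℕ, 1 ≤ j → j + 1 ≤ Fintype.card X - 1 →
      uC C' (C.symm 0) (C.symm (j : ZMod (Fintype.card X)))
        (C.symm ((j + 1 : ℕ) : ZMod (Fintype.card X))) = 1) :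
    uC C' = uC C := by
  haveI : NeZero (Fintype.card X) := ⟨by omega⟩
  set a := C.symm 0 with ha
  have hCa : C a = 0 := C.apply_symm_apply 0
  set p : ℕ → ℕ := fun j => (C' (C.symm (j : ZMod (Fintype.card X))) - C' a).val with hp
  have hlt : ∀ j : ℕ, 1 ≤ j → j + 1 ≤ Fintype.card X - 1 → p j < p (j + 1) := by
    intro j hj1 hj2
    have h := hagree j hj1 hj2
    unfold uC at h
    by_contra hcon
    rw [if_neg (fun hc => hcon hc.2.2.2)] at h
    exact (by decide : (0 : ZMod 2) ≠ 1) h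
  have p0 : p 0 = 0 := by
    rw [hp]; simp [← ha]
  have h1 : ∀ j, 1 ≤ j → j ≤ Fintype.card X - 1 → 1 ≤ p j := by
    intro j hj1 hj2
    rcases Nat.eq_zero_or_pos (p j) with h | h
    · exfalso
      simp only [hp] at h
      simp only [ZMod.val_eq_zero, sub_eq_zero] at h
      have := C.symm.injective (C'.injective h)
      apply_fun ZMod.val at this
      rw [ZMod.val_cast_of_lt (by omega), ZMod.val_zero] at this
      omega
    · exact h
  have hub : ∀ j, j ≤ Fintype.card X - 1 → p j ≤ Fintype.card X - 1 := by
    intro j _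
    have := ZMod.val_lt (C' (C.symm (j : ZMod (Fintype.card X))) - C' a)
    simp only [hp]; omega
  have peq := mono_aux p (Fintype.card X - 1) p0 h1 hlt hub
  have hdiff : ∀ t, C' t - C' a = C t - C a := by
    intro t
    have hv : (C t - C a).val < Fintype.card X := ZMod.val_lt _
    have hcast : (((C t - C a).val : ℕ) : ZMod (Fintype.card X)) = C t - C a :=
      ZMod.natCast_rightInverse _
    have ht : C.symm (((C t - C a).val : ℕ) : ZMod (Fintype.card X)) = t := by
      rw [hcast, hCa, sub_zero, C.symm_apply_apply]
    have hpj := peq (C t - C a).val (by omega)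
    simp only [hp, ht] at hpj
    exact ZMod.val_injective _ (by rw [hpj])
  have key : ∀ x y : X, C' y - C' x = C y - C x := by
    intro x y
    rw [← sub_sub_sub_cancel_right (C' y) (C' x) (C' a), hdiff y, hdiff x,
      sub_sub_sub_cancel_right]
  funext x y z
  unfold uC
  rw [key x y, key x z]

/-- Theorem 8 of the paper (dimension bound): if `U = u₀ + W ⊆ 𝒰^X` is a nonempty affine
subspace over GF(2) with `1_X` parallel to `U` and all of whose vectors are cyclic, then
`dim U ≤ |X| - 2`. -/
theorem stmt15 {X : Type*} [Fintype X] [DecidableEq X]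
    (h3 : 3 ≤ Fintype.card X)
    (W : Submodule (ZMod 2) (X → X → X → ZMod 2)) (u₀ : X → X → X → ZMod 2)
    (hsub : ∀ w ∈ W, memU (u₀ + w))
    (hone : (oneX : X → X → X → ZMod 2) ∈ W)
    (hcyc : ∀ w ∈ W, IsCyclicVec (u₀ + w)) :
    Module.finrank (ZMod 2) W ≤ Fintype.card X - 2 := by
  classical
  haveI : NeZero (Fintype.card X) := ⟨by omega⟩
  obtain ⟨C₀, hC₀⟩ := hcyc 0 (zero_mem W)
  rw [add_zero] at hC₀
  let φ : W →ₗ[ZMod 2] (Fin (Fintype.card X - 2) → ZMod 2) :=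
    { toFun := fun w i => (w : X → X → X → ZMod 2) (C₀.symm 0)
        (C₀.symm ((i.1 + 1 : ℕ) : ZMod (Fintype.card X)))
        (C₀.symm ((i.1 + 2 : ℕ) : ZMod (Fintype.card X)))
      map_add' := by intro w w'; funext i; simp
      map_smul' := by intro c w; funext i; simp }
  have hker : ∀ w : W, φ w = 0 → w = 0 := by
    intro w h0
    obtain ⟨C', hC'⟩ := hcyc w w.2
    have hagree : ∀ j : ℕ, 1 ≤ j → j + 1 ≤ Fintype.card X - 1 →
        uC C' (C₀.symm 0) (C₀.symm (j : ZMod (Fintype.card X)))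
          (C₀.symm ((j + 1 : ℕ) : ZMod (Fintype.card X))) = 1 := by
      intro j hj1 hj2
      have hco : (w : X → X → X → ZMod 2) (C₀.symm 0)
          (C₀.symm (j : ZMod (Fintype.card X)))
          (C₀.symm ((j + 1 : ℕ) : ZMod (Fintype.card X))) = 0 := by
        have h' := congrFun h0 ⟨j - 1, by omega⟩
        simp only [φ, LinearMap.coe_mk, AddHom.coe_mk, Pi.zero_apply] at h'
        rw [show j - 1 + 1 = j from by omega, show j - 1 + 2 = j + 1 from by omega] at h'
        exact h'
      have h1 := congrFun (congrFun (congrFun hC' (C₀.symm 0))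
        (C₀.symm (j : ZMod (Fintype.card X))))
        (C₀.symm ((j + 1 : ℕ) : ZMod (Fintype.card X)))
      rw [← h1]
      simp only [Pi.add_apply]
      rw [hco, add_zero, hC₀]
      exact uC_consec h3 C₀ j hj1 hj2
    have heq : uC C' = uC C₀ := uC_eq_of_agree h3 C₀ C' hagree
    have hsum : u₀ + (w : X → X → X → ZMod 2) = u₀ := by rw [hC', heq, ← hC₀]
    have hw0 : (w : X → X → X → ZMod 2) = 0 := add_eq_left.mp hsum
    exact Subtype.ext hw0
  have hinj : Function.Injective φ := by
    intro w₁ w₂ hww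
    have h := hker (w₁ - w₂) (by rw [map_sub, hww, sub_self])
    exact sub_eq_zero.mp h
  calc Module.finrank (ZMod 2) W
      ≤ Module.finrank (ZMod 2) (Fin (Fintype.card X - 2) → ZMod 2) :=
        LinearMap.finrank_le_finrank_of_injective hinj
    _ = Fintype.card X - 2 := Module.finrank_fin_fun _
end

section
/- Fix a finite linearly ordered set X with distinguished minimum element ∞, and distinct elements a,b,c,d ∈ X∖{∞}. For every u ∈ 𝒰^X: u(a,b,c) + u(a,b,d) = u(∞,a,c) + u(∞,b,c) + u(∞,a,d) + u(∞,b,d) over GF(2). -/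
open Finset

/-- Rewriting the quartet equation relative to `∞` (subsection 2.5 of the paper). -/
theorem stmt18 {X : Type*} [Fintype X] [LinearOrder X]
    (inf : X) (hmin : ∀ x : X, inf ≤ x)
    (a b c d : X)
    (ha : a ≠ inf) (hb : b ≠ inf) (hc : c ≠ inf) (hd : d ≠ inf)
    (hab : a ≠ b) (hac : a ≠ c) (had : a ≠ d)
    (hbc : b ≠ c) (hbd : b ≠ d) (hcd : c ≠ d)
    (u : X → X → X → ZMod 2) (hu : memU u) :
    u a b c + u a b d = u inf a c + u inf b c + u inf a d + u inf b d := by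
  have h1 := hu.2.2.2 inf a b c ha.symm hb.symm hc.symm hab hac hbc
  have h2 := hu.2.2.2 inf a b d ha.symm hb.symm hd.symm hab had hbd
  generalize u inf a b = p at h1 h2
  generalize u inf a c = q at h1 ⊢
  generalize u inf b c = r at h1 ⊢
  generalize u inf a d = s at h2 ⊢
  generalize u inf b d = t at h2 ⊢
  generalize u a b c = v at h1 ⊢
  generalize u a b d = w at h2 ⊢
  revert h1 h2
  revert p q r s t v w
  decide
end
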